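/- Let Q be a (Q',v0)-trimmable graph over a field k, and Q'' the subgraph of Q obtained by removing the loop x0. With π1 : L_k(Q) → L_k(Q'), π2 : L_k(Q'') → L_k(Q') the quotient-type maps killing v0 and edges into v0, f : L_k(Q) → L_k(Q'') ⊗ k[u,u⁻¹] the twisting map, and δ : L_k(Q') → L_k(Q') ⊗ k[u,u⁻¹] the grading coaction, the square with maps π1, f, δ, π2 ⊗ id commutes: δ ∘ π1 = (π2 ⊗ id) ∘ f. -/

import Mathlib

open scoped TensorProduct

noncomputable section

structure LGraph where
  V : Type
  E : Type
  s : E → V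
  t : E → V

namespace LGraph

/-- Generators of the Leavitt path algebra: vertices, edges, and ghost edges. -/
inductive LGen (Q : LGraph) : Type
  | vert : Q.V → LGen Q
  | edge : Q.E → LGen Q
  | ghost : Q.E → LGen Q

/-- The degree of a generator: vertices have degree 0, edges degree 1,
ghost edges degree -1. -/
def gdeg {Q : LGraph} : LGen Q → ℤ
  | .vert _ => 0
  | .edge _ => 1
  | .ghost _ => -1

open LGen in
/-- The Leavitt path algebra relations (L1)-(L5). -/
inductive LeavittRel (k : Type) [CommRing k] (Q : LGraph) [DecidableEq Q.V] [DecidableEq Q.E] :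
    FreeAlgebra k (LGen Q) → FreeAlgebra k (LGen Q) → Prop
  | vv (v w : Q.V) : LeavittRel k Q
      (FreeAlgebra.ι k (vert v) * FreeAlgebra.ι k (vert w))
      (if v = w then FreeAlgebra.ι k (vert v) else 0)
  | se (e : Q.E) : LeavittRel k Q
      (FreeAlgebra.ι k (vert (Q.s e)) * FreeAlgebra.ι k (edge e)) (FreeAlgebra.ι k (edge e))
  | et (e : Q.E) : LeavittRel k Q
      (FreeAlgebra.ι k (edge e) * FreeAlgebra.ι k (vert (Q.t e))) (FreeAlgebra.ι k (edge e))
  | tg (e : Q.E) : LeavittRel k Q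
      (FreeAlgebra.ι k (vert (Q.t e)) * FreeAlgebra.ι k (ghost e)) (FreeAlgebra.ι k (ghost e))
  | gs (e : Q.E) : LeavittRel k Q
      (FreeAlgebra.ι k (ghost e) * FreeAlgebra.ι k (vert (Q.s e))) (FreeAlgebra.ι k (ghost e))
  | gf (e f : Q.E) : LeavittRel k Q
      (FreeAlgebra.ι k (ghost e) * FreeAlgebra.ι k (edge f))
      (if e = f then FreeAlgebra.ι k (vert (Q.t e)) else 0)
  | ck (v : Q.V) (h : {e : Q.E | Q.s e = v}.Finite) (hne : {e : Q.E | Q.s e = v}.Nonempty) :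
      LeavittRel k Q
        (∑ e ∈ h.toFinset, FreeAlgebra.ι k (edge e) * FreeAlgebra.ι k (ghost e))
        (FreeAlgebra.ι k (vert v))

/-- The Leavitt path algebra of a graph `Q` over `k`. -/
abbrev LPA (k : Type) [CommRing k] (Q : LGraph) [DecidableEq Q.V] [DecidableEq Q.E] : Type :=
  RingQuot (LeavittRel k Q)

variable (k : Type) [CommRing k] (Q : LGraph) [DecidableEq Q.V] [DecidableEq Q.E]

/-- The vertex generators of the Leavitt path algebra. -/
def Lvert (v : Q.V) : LPA k Q :=
  RingQuot.mkAlgHom k (LeavittRel k Q) (FreeAlgebra.ι k (.vert v))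

/-- The edge generators of the Leavitt path algebra. -/
def Ledge (e : Q.E) : LPA k Q :=
  RingQuot.mkAlgHom k (LeavittRel k Q) (FreeAlgebra.ι k (.edge e))

/-- The ghost-edge generators of the Leavitt path algebra. -/
def Lghost (e : Q.E) : LPA k Q :=
  RingQuot.mkAlgHom k (LeavittRel k Q) (FreeAlgebra.ι k (.ghost e))

/-- The `n`-th homogeneous component of the standard `ℤ`-grading of the Leavitt
path algebra: spanned by monomials in the generators of total degree `n`, where
edges have degree `1`, ghost edges degree `-1` and vertices degree `0`. -/
def homComp (n : ℤ) : Submodule k (LPA k Q) :=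
  Submodule.span k { a : LPA k Q | ∃ l : List (LGen Q), (l.map gdeg).sum = n ∧
    a = RingQuot.mkAlgHom k (LeavittRel k Q) ((l.map (FreeAlgebra.ι k)).prod) }

/-- Paths in a graph, from a vertex to a vertex. -/
inductive GPath (Q : LGraph) : Q.V → Q.V → Type
  | nil (v : Q.V) : GPath Q v v
  | cons (e : Q.E) {w : Q.V} (p : GPath Q (Q.t e) w) : GPath Q (Q.s e) w

/-- Length of a path. -/
def GPath.length {Q : LGraph} : ∀ {v w : Q.V}, GPath Q v w → ℕ
  | _, _, .nil _ => 0
  | _, _, .cons _ p => p.length + 1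

/-- Concatenation of composable paths. -/
def GPath.comp {Q : LGraph} : ∀ {u v w : Q.V}, GPath Q u v → GPath Q v w → GPath Q u w
  | _, _, _, .nil _, q => q
  | _, _, _, .cons e p, q => .cons e (p.comp q)

/-- The element of the Leavitt path algebra corresponding to a path. -/
def pathElem : ∀ {v w : Q.V}, GPath Q v w → LPA k Q
  | _, _, .nil v => Lvert k Q v
  | _, _, .cons e p => Ledge k Q e * pathElem p

/-- The element of the Leavitt path algebra corresponding to the reversed ghost path `y*`. -/
def ghostElem : ∀ {v w : Q.V}, GPath Q v w → LPA k Q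
  | _, _, .nil v => Lvert k Q v
  | _, _, .cons e p => ghostElem p * Lghost k Q e

/-- The graph `Q \ {v₀}`: remove the vertex `v₀` and all edges ending at `v₀`.
This needs `{v₀}` to be hereditary, i.e. every edge emitted by `v₀` ends at `v₀`. -/
def deleteVertex (Q : LGraph) (v₀ : Q.V) (h : ∀ e, Q.s e = v₀ → Q.t e = v₀) : LGraph where
  V := {v : Q.V // v ≠ v₀}
  E := {e : Q.E // Q.t e ≠ v₀}
  s e := ⟨Q.s e.1, fun hs => e.2 (h e.1 hs)⟩
  t e := ⟨Q.t e.1, e.2⟩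

/-- The graph obtained by removing a single edge `x₀`. -/
def deleteEdge (Q : LGraph) (x₀ : Q.E) : LGraph where
  V := Q.V
  E := {e : Q.E // e ≠ x₀}
  s e := Q.s e.1
  t e := Q.t e.1


instance (Q : LGraph) [DecidableEq Q.V] (v₀ : Q.V) (h : ∀ e, Q.s e = v₀ → Q.t e = v₀) :
    DecidableEq (Q.deleteVertex v₀ h).V :=
  inferInstanceAs (DecidableEq {v : Q.V // v ≠ v₀})

instance (Q : LGraph) [DecidableEq Q.E] (v₀ : Q.V) (h : ∀ e, Q.s e = v₀ → Q.t e = v₀) :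
    DecidableEq (Q.deleteVertex v₀ h).E :=
  inferInstanceAs (DecidableEq {e : Q.E // Q.t e ≠ v₀})

instance (Q : LGraph) [DecidableEq Q.V] (x₀ : Q.E) : DecidableEq (Q.deleteEdge x₀).V :=
  inferInstanceAs (DecidableEq Q.V)

instance (Q : LGraph) [DecidableEq Q.E] (x₀ : Q.E) : DecidableEq (Q.deleteEdge x₀).E :=
  inferInstanceAs (DecidableEq {e : Q.E // e ≠ x₀})

/-- A graph `Q` is `(Q', v₀)`-trimmable, where `Q'` is the subgraph obtained by removing
`v₀` and all edges ending in `v₀`: the only edge emitted by `v₀` is a loop `x₀` at `v₀`,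
at least one other edge ends at `v₀`, and every vertex emitting an edge into `v₀`
also emits an edge ending inside `Q'`. -/
structure IsTrimmable (Q : LGraph) (v₀ : Q.V) (x₀ : Q.E) : Prop where
  loop_src : Q.s x₀ = v₀
  loop_tgt : Q.t x₀ = v₀
  only_out : ∀ e, Q.s e = v₀ → e = x₀
  exists_into : ∃ e, Q.t e = v₀ ∧ e ≠ x₀
  no_new_sinks : ∀ e, Q.t e = v₀ → e ≠ x₀ → ∃ e', Q.s e' = Q.s e ∧ Q.t e' ≠ v₀

/-- In a trimmable graph, `{v₀}` is hereditary. -/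
theorem IsTrimmable.her {Q : LGraph} {v₀ : Q.V} {x₀ : Q.E} (h : IsTrimmable Q v₀ x₀) :
    ∀ e, Q.s e = v₀ → Q.t e = v₀ := fun e hs => by rw [h.only_out e hs]; exact h.loop_tgt

/-- The `n`-th homogeneous component of `A ⊗ k[u,u⁻¹]` for the grading given by the
degree on the Laurent polynomial tensorand: elements of the form `a ⊗ uⁿ`. -/
def tensorGrade (k A : Type) [CommRing k] [Ring A] [Algebra k A] (n : ℤ) :
    Submodule k (A ⊗[k] LaurentPolynomial k) :=
  LinearMap.range ((TensorProduct.mk k A (LaurentPolynomial k)).flip (LaurentPolynomial.T n))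

theorem LPA.algHom_ext {A : Type*} [Semiring A] [Algebra k A] {φ ψ : LPA k Q →ₐ[k] A}
    (hv : ∀ v, φ (Lvert k Q v) = ψ (Lvert k Q v))
    (he : ∀ e, φ (Ledge k Q e) = ψ (Ledge k Q e))
    (hg : ∀ e, φ (Lghost k Q e) = ψ (Lghost k Q e)) : φ = ψ := by
  refine RingQuot.ringQuot_ext' _ _ _ (FreeAlgebra.hom_ext (funext fun g => ?_))
  cases g with
  | vert v => exact hv v
  | edge e => exact he e
  | ghost e => exact hg e

/-- For a `(Q',v₀)`-trimmable graph `Q`, with `Q'' = Q` minus the loop `x₀` and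
`Q' = Q \ {v₀}`, and with `π₁, π₂` the quotient-type maps killing `v₀` and the edges
into `v₀`, `f` the twisting map, and `δ` the grading coaction, the square commutes:
`δ ∘ π₁ = (π₂ ⊗ id) ∘ f`. -/
theorem _root_.Graph.square_commutes (k : Type) [Field k] (Q : LGraph)
    [DecidableEq Q.V] [DecidableEq Q.E] [Fintype Q.V] [Fintype Q.E]
    (v₀ : Q.V) (x₀ : Q.E) (hT : IsTrimmable Q v₀ x₀)
    (π₁ : LPA k Q →ₐ[k] LPA k (Q.deleteVertex v₀ hT.her))
    (hπ₁v : ∀ (v : Q.V) (hv : v ≠ v₀),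
      π₁ (Lvert k Q v) = Lvert k (Q.deleteVertex v₀ hT.her) ⟨v, hv⟩)
    (hπ₁v₀ : π₁ (Lvert k Q v₀) = 0)
    (hπ₁e : ∀ (e : Q.E) (he : Q.t e ≠ v₀),
      π₁ (Ledge k Q e) = Ledge k (Q.deleteVertex v₀ hT.her) ⟨e, he⟩)
    (hπ₁e0 : ∀ e : Q.E, Q.t e = v₀ → π₁ (Ledge k Q e) = 0)
    (hπ₁g : ∀ (e : Q.E) (he : Q.t e ≠ v₀),
      π₁ (Lghost k Q e) = Lghost k (Q.deleteVertex v₀ hT.her) ⟨e, he⟩)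
    (hπ₁g0 : ∀ e : Q.E, Q.t e = v₀ → π₁ (Lghost k Q e) = 0)
    (π₂ : LPA k (Q.deleteEdge x₀) →ₐ[k] LPA k (Q.deleteVertex v₀ hT.her))
    (hπ₂v : ∀ (v : Q.V) (hv : v ≠ v₀),
      π₂ (Lvert k (Q.deleteEdge x₀) v) = Lvert k (Q.deleteVertex v₀ hT.her) ⟨v, hv⟩)
    (hπ₂v₀ : π₂ (Lvert k (Q.deleteEdge x₀) v₀) = 0)
    (hπ₂e : ∀ (e : Q.E) (hx : e ≠ x₀) (he : Q.t e ≠ v₀),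
      π₂ (Ledge k (Q.deleteEdge x₀) ⟨e, hx⟩) = Ledge k (Q.deleteVertex v₀ hT.her) ⟨e, he⟩)
    (hπ₂e0 : ∀ (e : Q.E) (hx : e ≠ x₀), Q.t e = v₀ →
      π₂ (Ledge k (Q.deleteEdge x₀) ⟨e, hx⟩) = 0)
    (hπ₂g : ∀ (e : Q.E) (hx : e ≠ x₀) (he : Q.t e ≠ v₀),
      π₂ (Lghost k (Q.deleteEdge x₀) ⟨e, hx⟩) = Lghost k (Q.deleteVertex v₀ hT.her) ⟨e, he⟩)
    (hπ₂g0 : ∀ (e : Q.E) (hx : e ≠ x₀), Q.t e = v₀ →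
      π₂ (Lghost k (Q.deleteEdge x₀) ⟨e, hx⟩) = 0)
    (f : LPA k Q →ₐ[k] (LPA k (Q.deleteEdge x₀) ⊗[k] LaurentPolynomial k))
    (hfv : ∀ v : Q.V, f (Lvert k Q v) = Lvert k (Q.deleteEdge x₀) v ⊗ₜ[k] 1)
    (hfx₀ : f (Ledge k Q x₀) = Lvert k (Q.deleteEdge x₀) v₀ ⊗ₜ[k] LaurentPolynomial.T 1)
    (hfx₀g : f (Lghost k Q x₀) = Lvert k (Q.deleteEdge x₀) v₀ ⊗ₜ[k] LaurentPolynomial.T (-1))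
    (hfe : ∀ (e : Q.E) (he : e ≠ x₀),
      f (Ledge k Q e) = Ledge k (Q.deleteEdge x₀) ⟨e, he⟩ ⊗ₜ[k] LaurentPolynomial.T 1)
    (hfg : ∀ (e : Q.E) (he : e ≠ x₀),
      f (Lghost k Q e) = Lghost k (Q.deleteEdge x₀) ⟨e, he⟩ ⊗ₜ[k] LaurentPolynomial.T (-1))
    (δ : LPA k (Q.deleteVertex v₀ hT.her) →ₐ[k]
      (LPA k (Q.deleteVertex v₀ hT.her) ⊗[k] LaurentPolynomial k))
    (hδv : ∀ v, δ (Lvert k (Q.deleteVertex v₀ hT.her) v) =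
      Lvert k (Q.deleteVertex v₀ hT.her) v ⊗ₜ[k] 1)
    (hδe : ∀ e, δ (Ledge k (Q.deleteVertex v₀ hT.her) e) =
      Ledge k (Q.deleteVertex v₀ hT.her) e ⊗ₜ[k] LaurentPolynomial.T 1)
    (hδg : ∀ e, δ (Lghost k (Q.deleteVertex v₀ hT.her) e) =
      Lghost k (Q.deleteVertex v₀ hT.her) e ⊗ₜ[k] LaurentPolynomial.T (-1)) :
    (δ.comp π₁ : LPA k Q →ₐ[k] _) =
      (Algebra.TensorProduct.map π₂ (AlgHom.id k (LaurentPolynomial k))).comp f := by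
  refine LPA.algHom_ext k Q ?_ ?_ ?_
  · intro v
    simp only [AlgHom.comp_apply, hfv, Algebra.TensorProduct.map_tmul, AlgHom.id_apply]
    rcases eq_or_ne v v₀ with rfl | hv
    · rw [hπ₁v₀, hπ₂v₀, map_zero, TensorProduct.zero_tmul]
    · rw [hπ₁v v hv, hδv ⟨v, hv⟩, hπ₂v v hv]
  · intro e
    rcases eq_or_ne e x₀ with rfl | hx
    · simp only [AlgHom.comp_apply, hfx₀, Algebra.TensorProduct.map_tmul, AlgHom.id_apply]
      rw [hπ₁e0 e hT.loop_tgt, hπ₂v₀, map_zero, TensorProduct.zero_tmul]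
    simp only [AlgHom.comp_apply, hfe e hx, Algebra.TensorProduct.map_tmul, AlgHom.id_apply]
    rcases eq_or_ne (Q.t e) v₀ with he | he
    · rw [hπ₁e0 e he, hπ₂e0 e hx he, map_zero, TensorProduct.zero_tmul]
    · rw [hπ₁e e he, hδe ⟨e, he⟩, hπ₂e e hx he]
  · intro e
    rcases eq_or_ne e x₀ with rfl | hx
    · simp only [AlgHom.comp_apply, hfx₀g, Algebra.TensorProduct.map_tmul, AlgHom.id_apply]
      rw [hπ₁g0 e hT.loop_tgt, hπ₂v₀, map_zero, TensorProduct.zero_tmul]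
    simp only [AlgHom.comp_apply, hfg e hx, Algebra.TensorProduct.map_tmul, AlgHom.id_apply]
    rcases eq_or_ne (Q.t e) v₀ with he | he
    · rw [hπ₁g0 e he, hπ₂g0 e hx he, map_zero, TensorProduct.zero_tmul]
    · rw [hπ₁g e he, hδg ⟨e, he⟩, hπ₂g e hx he]

end LGraph
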